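/- In the CA instance with students s1 (T(s1) = 2, preference list c1 ≻ c2 ≻ c3) and s2 (T(s2) = 1, preference list c2 ≻ c1) and courses c1 (O(c1) = 1, upper quota 1, list s2 ≻ s1), c2 (O(c2) = 1, upper quota 1, list s1 ≻ s2) and c3 (O(c3) = 2, upper quota 1, list s1), the matching M = {(s1,c3), (s2,c2)} is pair-size-stable but not coalition-stable: (s1, {c1,c2}) is a blocking coalition of M. In particular, pair-size stability does not imply coalition stability. -/
import Mathlib

open Finset

/-- An instance of the Course Allocation problem: students `S`, courses `C`,
mutual acceptability `acc`, strict preferences of students over (acceptable) courses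
and of courses over (acceptable) students, positive credits, upper quotas and credit limits. -/
structure CA (S C : Type*) where
  acc : S → C → Prop
  sPref : S → C → C → Prop
  cPref : C → S → S → Prop
  credits : C → ℚ
  quota : C → ℕ
  limit : S → ℚ
  credits_pos : ∀ c, 0 < credits c
  sPref_irrefl : ∀ s c, ¬ sPref s c c
  sPref_trans : ∀ s c₁ c₂ c₃, sPref s c₁ c₂ → sPref s c₂ c₃ → sPref s c₁ c₃
  sPref_total : ∀ s c₁ c₂, acc s c₁ → acc s c₂ → c₁ ≠ c₂ → sPref s c₁ c₂ ∨ sPref s c₂ c₁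
  cPref_irrefl : ∀ c s, ¬ cPref c s s
  cPref_trans : ∀ c s₁ s₂ s₃, cPref c s₁ s₂ → cPref c s₂ s₃ → cPref c s₁ s₃
  cPref_total : ∀ c s₁ s₂, acc s₁ c → acc s₂ c → s₁ ≠ s₂ → cPref c s₁ s₂ ∨ cPref c s₂ s₁

section CourseAllocation

variable {S C : Type*} [DecidableEq S] [DecidableEq C]

/-- The set `C_M(s)` of courses assigned to student `s` in assignment `M`. -/
def CM (M : Finset (S × C)) (s : S) : Finset C :=
  (M.filter fun p => p.1 = s).image Prod.snd

/-- The set `S_M(c)` of students assigned to course `c` in assignment `M`. -/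
def SM (M : Finset (S × C)) (c : C) : Finset S :=
  (M.filter fun p => p.2 = c).image Prod.fst

/-- The total number of credits `O(D)` of a set of courses `D`. -/
def CA.O (I : CA S C) (D : Finset C) : ℚ := ∑ c ∈ D, I.credits c

/-- `M` is a matching: all pairs acceptable, credit limits and upper quotas respected. -/
def CA.IsMatching (I : CA S C) (M : Finset (S × C)) : Prop :=
  (∀ p ∈ M, I.acc p.1 p.2) ∧
  (∀ s, I.O (CM M s) ≤ I.limit s) ∧
  (∀ c, (SM M c).card ≤ I.quota c)

/-- Feasibility of a matching with respect to families `F` of feasible course sets. -/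
def Feasible (F : S → Set (Finset C)) (M : Finset (S × C)) : Prop :=
  ∀ s, CM M s ∈ F s

/-- `F` is a family of downward-feasible constraints: every feasible set consists of
acceptable courses, and subsets of feasible sets are feasible. -/
def CA.DownwardFeasible (I : CA S C) (F : S → Set (Finset C)) : Prop :=
  (∀ s, ∀ D ∈ F s, ∀ c ∈ D, I.acc s c) ∧
  (∀ s, ∀ D ∈ F s, ∀ D' ⊆ D, D' ∈ F s)

/-- Absent downward-feasible constraints (every set of courses feasible). -/
def noF : S → Set (Finset C) := fun _ => Set.univ

/-- Condition (1) of all blocking definitions: course `c` is undersubscribed in `M`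
or prefers `s` to one of its assigned students. -/
def CA.Wants (I : CA S C) (M : Finset (S × C)) (s : S) (c : C) : Prop :=
  (SM M c).card < I.quota c ∨ ∃ s' ∈ SM M c, I.cPref c s s'

/-- `(s, c)` is a blocking pair of `M` (w.r.t. feasibility constraints `F`). -/
def CA.BlockingPair (I : CA S C) (F : S → Set (Finset C)) (M : Finset (S × C))
    (s : S) (c : C) : Prop :=
  I.acc s c ∧ (s, c) ∉ M ∧ I.Wants M s c ∧
  ∃ D ⊆ CM M s, (∀ c' ∈ D, I.sPref s c c') ∧
    I.O (CM M s) - I.O D + I.credits c ≤ I.limit s ∧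
    (CM M s \ D) ∪ {c} ∈ F s

def CA.PairStable (I : CA S C) (F : S → Set (Finset C)) (M : Finset (S × C)) : Prop :=
  ∀ s c, ¬ I.BlockingPair F M s c

/-- `(s, c)` is a size-blocking pair of `M`: like a blocking pair, but additionally
the dropped set `D` must satisfy `O(D) ≤ O(c)`. -/
def CA.SizeBlockingPair (I : CA S C) (F : S → Set (Finset C)) (M : Finset (S × C))
    (s : S) (c : C) : Prop :=
  I.acc s c ∧ (s, c) ∉ M ∧ I.Wants M s c ∧
  ∃ D ⊆ CM M s, (∀ c' ∈ D, I.sPref s c c') ∧ I.O D ≤ I.credits c ∧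
    I.O (CM M s) - I.O D + I.credits c ≤ I.limit s ∧
    (CM M s \ D) ∪ {c} ∈ F s

def CA.PairSizeStable (I : CA S C) (F : S → Set (Finset C)) (M : Finset (S × C)) : Prop :=
  ∀ s c, ¬ I.SizeBlockingPair F M s c

/-- `(s, B)` is a blocking coalition of `M`. -/
def CA.BlockingCoalition (I : CA S C) (F : S → Set (Finset C)) (M : Finset (S × C))
    (s : S) (B : Finset C) : Prop :=
  B.Nonempty ∧ (∀ c ∈ B, I.acc s c ∧ (s, c) ∉ M) ∧ (∀ c ∈ B, I.Wants M s c) ∧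
  ∃ D ⊆ CM M s, (∀ c ∈ B, ∀ c' ∈ D, I.sPref s c c') ∧ I.O D ≤ I.O B ∧
    I.O (CM M s) - I.O D + I.O B ≤ I.limit s ∧
    (CM M s \ D) ∪ B ∈ F s

def CA.CoalitionStable (I : CA S C) (F : S → Set (Finset C)) (M : Finset (S × C)) : Prop :=
  ∀ s B, ¬ I.BlockingCoalition F M s B

/-- `(s, B)` is a first-blocking coalition of `M`: as a blocking coalition, except that
`s` need only prefer her most-preferred course of `B` to her most-preferred course of `D`
(equivalently, some course of `B` is preferred to every course of `D`; vacuous if `D = ∅`). -/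
def CA.FirstBlockingCoalition (I : CA S C) (F : S → Set (Finset C)) (M : Finset (S × C))
    (s : S) (B : Finset C) : Prop :=
  B.Nonempty ∧ (∀ c ∈ B, I.acc s c ∧ (s, c) ∉ M) ∧ (∀ c ∈ B, I.Wants M s c) ∧
  ∃ D ⊆ CM M s, (∃ b ∈ B, ∀ c' ∈ D, I.sPref s b c') ∧ I.O D ≤ I.O B ∧
    I.O (CM M s) - I.O D + I.O B ≤ I.limit s ∧
    (CM M s \ D) ∪ B ∈ F s

def CA.FirstCoalitionStable (I : CA S C) (F : S → Set (Finset C)) (M : Finset (S × C)) : Prop :=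
  ∀ s B, ¬ I.FirstBlockingCoalition F M s B

/-- Every course exactly fills its upper quota. -/
def CA.CourseComplete (I : CA S C) (M : Finset (S × C)) : Prop :=
  ∀ c, (SM M c).card = I.quota c

/-- Every student takes as many credits as her credit limit. -/
def CA.StudentComplete (I : CA S C) (M : Finset (S × C)) : Prop :=
  ∀ s, I.O (CM M s) = I.limit s

/-- The size of a matching: total number of credits taken by all students. -/
def CA.size [Fintype S] (I : CA S C) (M : Finset (S × C)) : ℚ :=
  ∑ s : S, I.O (CM M s)

/-- `ml` is a master list of students for the instance `I`: a strict total order on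
students with which every course's preferences are consistent. -/
def CA.MasterList (I : CA S C) (ml : S → S → Prop) : Prop :=
  (∀ s, ¬ ml s s) ∧ (∀ s₁ s₂ s₃, ml s₁ s₂ → ml s₂ s₃ → ml s₁ s₃) ∧
  (∀ s₁ s₂, s₁ ≠ s₂ → ml s₁ s₂ ∨ ml s₂ s₁) ∧
  (∀ c s s', I.acc s c → I.acc s' c → (I.cPref c s s' ↔ ml s s'))

end CourseAllocation
/-- Builds a `CA` instance from rank functions (smaller rank = more preferred), with a fixed
injective tie-breaking that never fires when ranks are distinct on acceptable pairs. -/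
def CA.ofRanks {S C : Type*} (acc : S → C → Prop) (srank : S → C → ℕ) (crank : C → S → ℕ)
    (iS : S → ℕ) (iC : C → ℕ) (hiS : Function.Injective iS) (hiC : Function.Injective iC)
    (credits : C → ℚ) (quota : C → ℕ) (limit : S → ℚ) (hpos : ∀ c, 0 < credits c) :
    CA S C where
  acc := acc
  sPref s c c' := acc s c ∧ acc s c' ∧
    (srank s c < srank s c' ∨ (srank s c = srank s c' ∧ iC c < iC c'))
  cPref c s s' := acc s c ∧ acc s' c ∧
    (crank c s < crank c s' ∨ (crank c s = crank c s' ∧ iS s < iS s'))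
  credits := credits
  quota := quota
  limit := limit
  credits_pos := hpos
  sPref_irrefl := by rintro s c ⟨-, -, h⟩; omega
  sPref_trans := by rintro s c₁ c₂ c₃ ⟨h1, -, ha⟩ ⟨-, h2, hb⟩; exact ⟨h1, h2, by omega⟩
  sPref_total := by
    intro s c₁ c₂ h1 h2 hne
    have hi : iC c₁ ≠ iC c₂ := fun h => hne (hiC h)
    rcases Nat.lt_trichotomy (srank s c₁) (srank s c₂) with h | h | h
    · exact Or.inl ⟨h1, h2, Or.inl h⟩
    · rcases Nat.lt_or_ge (iC c₁) (iC c₂) with h' | h'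
      · exact Or.inl ⟨h1, h2, Or.inr ⟨h, h'⟩⟩
      · exact Or.inr ⟨h2, h1, Or.inr ⟨h.symm, by omega⟩⟩
    · exact Or.inr ⟨h2, h1, Or.inl h⟩
  cPref_irrefl := by rintro c s ⟨-, -, h⟩; omega
  cPref_trans := by rintro c s₁ s₂ s₃ ⟨h1, -, ha⟩ ⟨-, h2, hb⟩; exact ⟨h1, h2, by omega⟩
  cPref_total := by
    intro c s₁ s₂ h1 h2 hne
    have hi : iS s₁ ≠ iS s₂ := fun h => hne (hiS h)
    rcases Nat.lt_trichotomy (crank c s₁) (crank c s₂) with h | h | h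
    · exact Or.inl ⟨h1, h2, Or.inl h⟩
    · rcases Nat.lt_or_ge (iS s₁) (iS s₂) with h' | h'
      · exact Or.inl ⟨h1, h2, Or.inr ⟨h, h'⟩⟩
      · exact Or.inr ⟨h2, h1, Or.inr ⟨h.symm, by omega⟩⟩
    · exact Or.inr ⟨h2, h1, Or.inl h⟩
/-- The CA instance of Statement 8: students `s1 = 0` (limit 2, list `c1 ≻ c2 ≻ c3`),
`s2 = 1` (limit 1, list `c2 ≻ c1`); courses `c1 = 0` (1 credit, quota 1, list `s2 ≻ s1`),
`c2 = 1` (1 credit, quota 1, list `s1 ≻ s2`), `c3 = 2` (2 credits, quota 1, list `s1`). -/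
def I8 : CA (Fin 2) (Fin 3) :=
  CA.ofRanks (fun s c => s = 0 ∨ c ≠ 2)
    ![![0, 1, 2], ![1, 0, 0]]
    ![![1, 0], ![0, 1], ![0, 0]]
    Encodable.encode Encodable.encode Encodable.encode_injective Encodable.encode_injective
    ![1, 1, 2] (fun _ => 1) ![2, 1]
    (by decide)

/-- The matching `M = {(s1,c3), (s2,c2)}`. -/
def M8 : Finset (Fin 2 × Fin 3) := {(0, 2), (1, 1)}

lemma cm0 : CM M8 (0:Fin 2) = {2} := by decide
lemma cm1 : CM M8 (1:Fin 2) = {1} := by decide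
lemma ocm0 : I8.O {2} = 2 := by simp [CA.O]; rfl
lemma ocm1 : I8.O {1} = 1 := by simp [CA.O]; rfl
lemma oe : I8.O (∅ : Finset (Fin 3)) = 0 := by simp [CA.O]
lemma cr0 : I8.credits 0 = 1 := rfl
lemma cr1 : I8.credits 1 = 1 := rfl
lemma o01 : I8.O {0,1} = 2 := by simp [CA.O]; rw [cr0, cr1]; norm_num
lemma lim0 : I8.limit 0 = 2 := rfl
lemma lim1 : I8.limit 1 = 1 := rfl
lemma bc : I8.BlockingCoalition noF M8 0 {0, 1} := by
  refine ⟨⟨0, by decide⟩, ?_, ?_, {2}, by rw [cm0], ?_, ?_, ?_, Set.mem_univ _⟩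
  · intro c hc; fin_cases hc
    · exact ⟨Or.inl rfl, by decide⟩
    · exact ⟨Or.inl rfl, by decide⟩
  · intro c hc; fin_cases hc
    · exact Or.inl (by decide)
    · exact Or.inr ⟨1, by decide, Or.inl rfl, Or.inr (by decide), Or.inl (by decide)⟩
  · intro c hc c' hc'; fin_cases hc <;> fin_cases hc' <;>
      exact ⟨Or.inl rfl, Or.inl rfl, Or.inl (by decide)⟩
  · rw [ocm0, o01]
  · rw [cm0, ocm0, o01, lim0]; norm_num
lemma im : I8.IsMatching M8 := by
  refine ⟨?_, ?_, ?_⟩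
  · intro p hp; fin_cases hp
    · exact Or.inl rfl
    · exact Or.inr (by decide)
  · intro s; rcases (by omega : s = 0 ∨ s = 1) with rfl | rfl
    · rw [cm0, ocm0, lim0]
    · rw [cm1, ocm1, lim1]
  · intro c; rcases (by omega : c = 0 ∨ c = 1 ∨ c = 2) with rfl | rfl | rfl <;>
      first | exact Nat.le_of_eq (by decide) | exact Nat.le_of_lt (by decide)
lemma pss : I8.PairSizeStable noF M8 := by
  rintro s c ⟨hacc, hnm, hw, D, hD, hpref, hsz, hlim, -⟩
  rcases (by omega : s = 0 ∨ s = 1) with rfl | rfl <;>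
    rcases (by omega : c = 0 ∨ c = 1 ∨ c = 2) with rfl | rfl | rfl
  · rw [cm0] at hD hlim
    rcases Finset.subset_singleton_iff.mp hD with rfl | rfl
    · rw [ocm0, oe, cr0, lim0] at hlim; norm_num at hlim
    · rw [ocm0, cr0] at hsz; norm_num at hsz
  · rw [cm0] at hD hlim
    rcases Finset.subset_singleton_iff.mp hD with rfl | rfl
    · rw [ocm0, oe, cr1, lim0] at hlim; norm_num at hlim
    · rw [ocm0, cr1] at hsz; norm_num at hsz
  · exact hnm (by decide)
  · rw [cm1] at hD hlim
    rcases Finset.subset_singleton_iff.mp hD with rfl | rfl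
    · rw [ocm1, oe, cr0, lim1] at hlim; norm_num at hlim
    · exact absurd (hpref 1 (Finset.mem_singleton_self 1)).2.2 (by decide)
  · exact hnm (by decide)
  · rcases hacc with h | h
    · exact absurd h (by decide)
    · exact h rfl

/-- `M8` is a pair-size-stable matching of `I8` which is not
coalition-stable: `(s1, {c1, c2})` is a blocking coalition.  In particular, pair-size
stability does not imply coalition stability. -/
theorem I8_pairSizeStable_not_coalitionStable :
    I8.IsMatching M8 ∧ I8.PairSizeStable noF M8 ∧
    I8.BlockingCoalition noF M8 0 {0, 1} ∧ ¬ I8.CoalitionStable noF M8 :=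
  ⟨im, pss, bc, fun h => h 0 {0, 1} bc⟩
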